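/- Let G be a subgraph of the complete bipartite graph K_{7,30} with parts X (of size 7) and Y (of size 30) such that G contains no copy of K_{2,2} and Δ(G_X) = 7, and let B = {x ∈ X : deg_G(x) = 7}. If |B| = 2, then the bipartite complement of G contains a copy of K_{5,5}. -/

import Mathlib

/-- A subgraph of the complete bipartite graph `K_{m,n}` is identified with its
edge set, a finset of pairs `(x, y)` with `x` in the part `X = Fin m` and
`y` in the part `Y = Fin n`.  `bContains s t E` says that the bipartite graph
with edge set `E` contains a copy of `K_{s,t}`: there are `s` distinct
vertices of `X` and `t` distinct vertices of `Y` with all pairs present. -/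
def bContains {m n : ℕ} (s t : ℕ) (E : Finset (Fin m × Fin n)) : Prop :=
  ∃ (A : Finset (Fin m)) (B : Finset (Fin n)),
    A.card = s ∧ B.card = t ∧ ∀ x ∈ A, ∀ y ∈ B, (x, y) ∈ E

/-- The bipartite complement: edge set `(X × Y) \ E`. -/
def bCompl {m n : ℕ} (E : Finset (Fin m × Fin n)) : Finset (Fin m × Fin n) :=
  Finset.univ \ E

/-- The neighborhood `N_G(x) ⊆ Y` of a vertex `x ∈ X`. -/
def bNbhd {m n : ℕ} (E : Finset (Fin m × Fin n)) (x : Fin m) : Finset (Fin n) :=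
  Finset.univ.filter (fun y => (x, y) ∈ E)

/-- The degree of a vertex `x ∈ X`. -/
def bDeg {m n : ℕ} (E : Finset (Fin m × Fin n)) (x : Fin m) : ℕ :=
  (bNbhd E x).card

/-- `Δ(G_X)`: the maximum degree over the vertices of the part `X`. -/
def bMaxDegX {m n : ℕ} (E : Finset (Fin m × Fin n)) : ℕ :=
  Finset.univ.sup (fun x => bDeg E x)

/-! The degree conditions bound the number of edges by `2 · 7 + 5 · 6 = 44`. Count the pairs
`(A, y)` with `A` a 5-subset of `X` and `y ∈ Y` adjacent to no vertex of `A`: a vertex `y` of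
degree `d` lies in `C(7 - d, 5) ≥ 11 - 5d` of them, so there are at least `30 · 11 - 5 · 44 = 110`
such pairs. As `110 > 4 · C(7, 5)`, some 5-set `A` has five common non-neighbours. -/

open Finset

section

variable {m n : ℕ}

def bNbhdY (E : Finset (Fin m × Fin n)) (y : Fin n) : Finset (Fin m) :=
  univ.filter (fun x => (x, y) ∈ E)

def bDegY (E : Finset (Fin m × Fin n)) (y : Fin n) : ℕ :=
  #(bNbhdY E y)

lemma bDeg_le_bMaxDegX (E : Finset (Fin m × Fin n)) (x : Fin m) : bDeg E x ≤ bMaxDegX E :=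
  le_sup (mem_univ x)

lemma bDegY_bCompl (E : Finset (Fin m × Fin n)) (y : Fin n) :
    bDegY (bCompl E) y = m - bDegY E y := by
  have : bNbhdY (bCompl E) y = univ \ bNbhdY E y := by
    ext x; simp [bNbhdY, bCompl]
  rw [bDegY, bDegY, this, card_sdiff_of_subset (subset_univ _), card_univ, Fintype.card_fin]

lemma sum_bDegY_eq_sum_bDeg (E : Finset (Fin m × Fin n)) :
    ∑ y, bDegY E y = ∑ x, bDeg E x :=
  (sum_card_bipartiteAbove_eq_sum_card_bipartiteBelow (fun x y => (x, y) ∈ E)).symm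

lemma sum_bDeg_le_of_card_maxDeg (E : Finset (Fin m × Fin n)) {D b : ℕ}
    (hΔ : bMaxDegX E = D) (hB : #(univ.filter (fun x => bDeg E x = D)) = b) :
    ∑ x, bDeg E x ≤ b * D + (m - b) * (D - 1) := by
  have hle : ∀ x, bDeg E x ≤ D := fun x => hΔ ▸ bDeg_le_bMaxDegX E x
  have hrest : #(univ.filter (fun x => ¬ bDeg E x = D)) = m - b := by
    rw [filter_not, card_sdiff_of_subset (filter_subset _ _), hB, card_univ, Fintype.card_fin]
  rw [← sum_filter_add_sum_filter_not univ (fun x => bDeg E x = D)]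
  gcongr
  · rw [sum_congr rfl fun x hx => (mem_filter.1 hx).2, sum_const, hB, smul_eq_mul]
  · rw [← hrest, ← smul_eq_mul]
    refine sum_le_card_nsmul _ _ _ fun x hx => ?_
    have := hle x
    have := (mem_filter.1 hx).2
    omega

lemma bContains_of_mul_lt_sum_choose (F : Finset (Fin m × Fin n)) {s t : ℕ}
    (h : m.choose s * t < ∑ y, (bDegY F y).choose s) : bContains s (t + 1) F := by
  let r : Finset (Fin m) → Fin n → Prop := fun A y => A ⊆ bNbhdY F y
  have hcount : ∑ A ∈ univ.powersetCard s, #(univ.bipartiteAbove r A) =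
      ∑ y, (bDegY F y).choose s := by
    rw [sum_card_bipartiteAbove_eq_sum_card_bipartiteBelow]
    refine sum_congr rfl fun y _ => ?_
    rw [bDegY, ← card_powersetCard]
    congr 1
    ext A
    simp [r, bipartiteBelow, and_comm]
  have hsum : ∑ _A ∈ (univ : Finset (Fin m)).powersetCard s, t < ∑ A ∈ univ.powersetCard s,
      #(univ.bipartiteAbove r A) := by
    simpa [hcount] using h
  obtain ⟨A, hA, htA⟩ := exists_lt_of_sum_lt hsum
  obtain ⟨B, hBA, hB⟩ := exists_subset_card_eq (Nat.succ_le_of_lt htA)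
  refine ⟨A, B, (mem_powersetCard.1 hA).2, hB, fun x hx y hy => ?_⟩
  have hAy : A ⊆ bNbhdY F y := ((mem_bipartiteAbove r).1 (hBA hy)).2
  simpa [bNbhdY] using hAy hx

end

-- `11 - 5k` is the chord of the convex function `k ↦ C(7 - k, 5)` through `k = 1, 2`.
lemma eleven_le_choose_seven_sub_add (k : ℕ) : 11 ≤ (7 - k).choose 5 + 5 * k := by
  rcases le_or_gt k 7 with hk | hk
  · interval_cases k <;> decide
  · omega

theorem stmt_17_general (E : Finset (Fin 7 × Fin 30))
    (hΔ : bMaxDegX E = 7)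
    (hB : (Finset.univ.filter (fun x : Fin 7 => bDeg E x = 7)).card = 2) :
    bContains 5 5 (bCompl E) := by
  have hdeg : ∑ x, bDeg E x ≤ 2 * 7 + (7 - 2) * (7 - 1) := sum_bDeg_le_of_card_maxDeg E hΔ hB
  have hlin : ∑ _y : Fin 30, 11 ≤ ∑ y, ((7 - bDegY E y).choose 5 + 5 * bDegY E y) :=
    sum_le_sum fun y _ => eleven_le_choose_seven_sub_add (bDegY E y)
  rw [sum_add_distrib, ← mul_sum, sum_bDegY_eq_sum_bDeg] at hlin
  refine bContains_of_mul_lt_sum_choose (t := 4) (bCompl E) ?_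
  simp only [bDegY_bCompl, sum_const, card_univ, Fintype.card_fin, smul_eq_mul] at hlin ⊢
  have hchoose : (7 : ℕ).choose 5 = 21 := rfl
  omega

theorem stmt_17 (E : Finset (Fin 7 × Fin 30))
    (hK : ¬ bContains 2 2 E) (hΔ : bMaxDegX E = 7)
    (hB : (Finset.univ.filter (fun x : Fin 7 => bDeg E x = 7)).card = 2) :
    bContains 5 5 (bCompl E) :=
  stmt_17_general E hΔ hB
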